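/- arXiv:2210.13515 — 5 statements merged into one kernel-verified Lean document; each statement's English description precedes it below -/
import Mathlib

section
/- Let p be an odd prime. For every n ≥ 1 and every function f : 𝔽_p^n → ℝ with 0 ≤ f(x) ≤ 1 for all x, we have T_Φ(f) + T_Φ(1 − f) ≥ 2⁻⁸. (In other words, the system Φ is common.) -/
open Finset

/-- `G p n` is the vector space `𝔽_p^n`. -/
abbrev G (p n : ℕ) : Type := Fin n → ZMod p

/-- The set of solutions in `(𝔽_p^n)^9` to the system `Φ`:
`x₁ - x₂ + x₃ - x₄ = 0` and `x₅ - x₆ + x₇ - x₈ + x₉ = 0`. -/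
def phiSols (p n : ℕ) [NeZero p] : Finset (Fin 9 → G p n) :=
  Finset.univ.filter fun x =>
    x 0 - x 1 + x 2 - x 3 = 0 ∧ x 4 - x 5 + x 6 - x 7 + x 8 = 0

/-- `T_Φ(f)`: the average of `f(x₁)⋯f(x₉)` over solutions of `Φ`. -/
noncomputable def Tphi (p n : ℕ) [NeZero p] (f : G p n → ℝ) : ℝ :=
  (∑ x ∈ phiSols p n, ∏ i, f (x i)) / (phiSols p n).card

/-! Write `f = m + h` with `m` the mean of `f` and `q = p ^ n`, so that `1 - f = (1 - m) - h`.
Parametrising each equation of `Φ` by its free variables, `T_Φ(f) = Λ₄(f) Λ₅(f) / q⁷`; all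
cross terms in `Λ₄(m + h)` and `Λ₅(m + h)` vanish because `h` and its autocorrelation have mean
zero, leaving `Λ₄(f) = q³m⁴ + Λ₄(h)` with `Λ₄(h) = ∑ (h ⋆ h)² ≥ 0`, and `Λ₅(f) = q⁴m⁵ + Λ₅(h)`.
Cauchy–Schwarz twice and `∑ h² ≤ q / 4` give `|Λ₅(h)| ≤ (q / 2) Λ₄(h)`. In
`q⁷ (T_Φ(f) + T_Φ(1 - f)) = q⁷(m⁹ + (1-m)⁹) + q⁴Λ₄(h)(m⁵ + (1-m)⁵) + q³Λ₅(h)(m⁴ - (1-m)⁴)`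
the last term is therefore dominated by the second, as `|a⁴ - b⁴| ≤ 2(a⁵ + b⁵)` when `a + b = 1`,
and `m⁹ + (1-m)⁹ ≥ 2⁻⁸` by convexity. -/

theorem sum_const_add_mul_const_add {ι R : Type*} [Fintype ι] [CommRing R] (a b : R)
    (A B : ι → R) (hA : ∑ i, A i = 0) (hB : ∑ i, B i = 0) :
    ∑ i, (a + A i) * (b + B i) = Fintype.card ι * a * b + ∑ i, A i * B i := by
  simp only [add_mul, mul_add, sum_add_distrib, ← mul_sum, ← sum_mul, hA, hB, sum_const,
    card_univ, nsmul_eq_mul]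
  ring

section Correlation

variable {α : Type*} [AddCommGroup α] [Fintype α]

theorem sum_comp_add_left {M : Type*} [AddCommMonoid M] (h : α → M) (u : α) :
    ∑ x, h (u + x) = ∑ x, h x :=
  Equiv.sum_comp (Equiv.addLeft u) h

theorem sum_comp_add_right {M : Type*} [AddCommMonoid M] (h : α → M) (u : α) :
    ∑ x, h (x + u) = ∑ x, h x :=
  Equiv.sum_comp (Equiv.addRight u) h

noncomputable def autocorr (h : α → ℝ) (u : α) : ℝ := ∑ x, h x * h (x + u)

theorem sum_autocorr (h : α → ℝ) : ∑ u, autocorr h u = (∑ x, h x) ^ 2 := by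
  simp_rw [autocorr]
  rw [sum_comm]
  simp_rw [← mul_sum, sum_comp_add_left, ← sum_mul, sq]

theorem autocorr_neg (h : α → ℝ) : autocorr (-h) = autocorr h := by
  ext u; simp [autocorr]

theorem autocorr_const_add (c : ℝ) (h : α → ℝ) (hh : ∑ x, h x = 0) (u : α) :
    autocorr (fun x => c + h x) u = Fintype.card α * c ^ 2 + autocorr h u := by
  rw [autocorr, sum_const_add_mul_const_add c c _ _ hh (by rwa [sum_comp_add_right]), autocorr]
  ring

/- Unnormalised solution counts of `x₁ - x₂ + x₃ - x₄ = 0` and `x₅ - x₆ + x₇ - x₈ + x₉ = 0`,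
with `x₁` and `x₉` solved for. -/
noncomputable def Λ₄ (g : α → ℝ) : ℝ := ∑ a, ∑ b, ∑ c, g (a - b + c) * g a * g b * g c

noncomputable def Λ₅ (g : α → ℝ) : ℝ :=
  ∑ a, ∑ b, ∑ c, ∑ d, g a * g b * g c * g d * g (b + d - a - c)

theorem Λ₄_eq_sum_autocorr_sq (g : α → ℝ) : Λ₄ g = ∑ u, autocorr g u ^ 2 := by
  calc Λ₄ g = ∑ b, ∑ u, ∑ c, g (b + u - b + c) * g (b + u) * g b * g c := by
        rw [Λ₄, sum_comm]
        exact sum_congr rfl fun b _ => (sum_comp_add_left _ b).symm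
    _ = ∑ u, autocorr g u ^ 2 := by
        simp_rw [autocorr, sq, sum_mul_sum, add_sub_cancel_left]
        rw [sum_comm]
        refine sum_congr rfl fun u _ => sum_congr rfl fun b _ => sum_congr rfl fun c _ => ?_
        rw [add_comm b u, add_comm c u]; ring

theorem Λ₅_eq_sum_autocorr (g : α → ℝ) :
    Λ₅ g = ∑ u, autocorr g u * ∑ v, autocorr g v * g (u + v) := by
  calc Λ₅ g
        = ∑ a, ∑ u, ∑ c, ∑ v, g a * g (a + u) * g c * g (c + v) * g (a + u + (c + v) - a - c) :=
        sum_congr rfl fun a _ => (sum_comp_add_left _ a).symm.trans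
          (sum_congr rfl fun u _ => sum_congr rfl fun c _ => (sum_comp_add_left _ c).symm)
    _ = ∑ u, autocorr g u * ∑ v, autocorr g v * g (u + v) := by
        simp_rw [autocorr, sum_mul, mul_sum]
        rw [sum_comm]
        refine sum_congr rfl fun u _ => sum_congr rfl fun a _ => ?_
        rw [sum_comm]
        refine sum_congr rfl fun v _ => sum_congr rfl fun c _ => ?_
        rw [show a + u + (c + v) - a - c = u + v by abel]; ring

theorem Λ₄_neg (g : α → ℝ) : Λ₄ (-g) = Λ₄ g := by
  simp_rw [Λ₄_eq_sum_autocorr_sq, autocorr_neg]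

theorem Λ₅_neg (g : α → ℝ) : Λ₅ (-g) = -Λ₅ g := by
  simp [Λ₅_eq_sum_autocorr, autocorr_neg]

theorem Λ₄_const_add (c : ℝ) (h : α → ℝ) (hh : ∑ x, h x = 0) :
    Λ₄ (fun x => c + h x) = Fintype.card α ^ 3 * c ^ 4 + Λ₄ h := by
  have hC : ∑ u, autocorr h u = 0 := by rw [sum_autocorr, hh, sq, zero_mul]
  simp_rw [Λ₄_eq_sum_autocorr_sq, autocorr_const_add c h hh, sq,
    sum_const_add_mul_const_add _ _ _ _ hC hC]
  ring

theorem Λ₅_const_add (c : ℝ) (h : α → ℝ) (hh : ∑ x, h x = 0) :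
    Λ₅ (fun x => c + h x) = Fintype.card α ^ 4 * c ^ 5 + Λ₅ h := by
  have hC : ∑ u, autocorr h u = 0 := by rw [sum_autocorr, hh, sq, zero_mul]
  have hI : ∑ u, ∑ v, autocorr h v * h (u + v) = 0 := by
    rw [sum_comm]
    simp_rw [← mul_sum, sum_comp_add_right, hh, mul_zero, sum_const_zero]
  have inner (u : α) : ∑ v, (Fintype.card α * c ^ 2 + autocorr h v) * (c + h (u + v)) =
      Fintype.card α * (Fintype.card α * c ^ 2) * c + ∑ v, autocorr h v * h (u + v) :=
    sum_const_add_mul_const_add _ _ _ _ hC (by rwa [sum_comp_add_left])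
  simp_rw [Λ₅_eq_sum_autocorr, autocorr_const_add c h hh, inner,
    sum_const_add_mul_const_add _ _ _ _ hC hI]
  ring

theorem Λ₅_eq_sum_mul_conv (g : α → ℝ) :
    Λ₅ g = ∑ w, g w * ∑ u, autocorr g u * autocorr g (w - u) := by
  have shift (u : α) : ∑ v, autocorr g v * g (u + v) = ∑ w, autocorr g (w - u) * g w := by
    rw [← sum_comp_add_left (fun w => autocorr g (w - u) * g w) u]
    simp only [add_sub_cancel_left]
  simp_rw [Λ₅_eq_sum_autocorr, shift, mul_sum]
  rw [sum_comm]
  exact sum_congr rfl fun w _ => sum_congr rfl fun u _ => by ring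

theorem sq_sum_mul_comp_sub_le (F : α → ℝ) (w : α) :
    (∑ u, F u * F (w - u)) ^ 2 ≤ (∑ u, F u ^ 2) ^ 2 := by
  have reflect : ∑ u, F (w - u) ^ 2 = ∑ u, F u ^ 2 :=
    Equiv.sum_comp (Equiv.subLeft w) (fun u => F u ^ 2)
  calc (∑ u, F u * F (w - u)) ^ 2 ≤ (∑ u, F u ^ 2) * ∑ u, F (w - u) ^ 2 :=
        sum_mul_sq_le_sq_mul_sq _ _ _
    _ = (∑ u, F u ^ 2) ^ 2 := by rw [reflect, sq]

theorem sq_Λ₅_le (g : α → ℝ) :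
    Λ₅ g ^ 2 ≤ Fintype.card α * (∑ x, g x ^ 2) * Λ₄ g ^ 2 := by
  rw [Λ₅_eq_sum_mul_conv, Λ₄_eq_sum_autocorr_sq]
  calc (∑ w, g w * ∑ u, autocorr g u * autocorr g (w - u)) ^ 2
      ≤ (∑ w, g w ^ 2) * ∑ w, (∑ u, autocorr g u * autocorr g (w - u)) ^ 2 :=
        sum_mul_sq_le_sq_mul_sq _ _ _
    _ ≤ (∑ w, g w ^ 2) * ∑ _w : α, (∑ u, autocorr g u ^ 2) ^ 2 :=
        mul_le_mul_of_nonneg_left (sum_le_sum fun w _ => sq_sum_mul_comp_sub_le _ w)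
          (by positivity)
    _ = Fintype.card α * (∑ x, g x ^ 2) * (∑ u, autocorr g u ^ 2) ^ 2 := by
        rw [sum_const, card_univ, nsmul_eq_mul]; ring

theorem abs_Λ₅_le (g : α → ℝ) (hg : ∑ x, g x ^ 2 ≤ Fintype.card α / 4) :
    |Λ₅ g| ≤ Fintype.card α / 2 * Λ₄ g := by
  have hΛ₄ : 0 ≤ Λ₄ g := by rw [Λ₄_eq_sum_autocorr_sq]; positivity
  refine abs_le_of_sq_le_sq ?_ (by positivity)
  calc Λ₅ g ^ 2 ≤ Fintype.card α * (∑ x, g x ^ 2) * Λ₄ g ^ 2 := sq_Λ₅_le g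
    _ ≤ Fintype.card α * (Fintype.card α / 4) * Λ₄ g ^ 2 := by gcongr
    _ = (Fintype.card α / 2 * Λ₄ g) ^ 2 := by ring

end Correlation

theorem sum_sq_sub_mean_le {ι : Type*} [Fintype ι] [Nonempty ι] (f : ι → ℝ)
    (hf : ∀ x, 0 ≤ f x ∧ f x ≤ 1) :
    ∑ x, (f x - (∑ y, f y) / Fintype.card ι) ^ 2 ≤ Fintype.card ι / 4 := by
  set q : ℝ := (Fintype.card ι : ℝ)
  set m := (∑ y, f y) / q
  have hq : 0 < q := Nat.cast_pos.2 Fintype.card_pos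
  have hsum : ∑ y, f y = q * m := by rw [mul_div_cancel₀ _ hq.ne']
  calc ∑ x, (f x - m) ^ 2 = ∑ x, f x ^ 2 - q * m ^ 2 := by
        simp_rw [sub_sq, sum_add_distrib, sum_sub_distrib, ← sum_mul, ← mul_sum, hsum, sum_const,
          card_univ, nsmul_eq_mul]
        ring
    _ ≤ ∑ x, f x - q * m ^ 2 := by
        gcongr with x
        nlinarith [hf x]
    _ ≤ q / 4 := by nlinarith [sq_nonneg (m - 1 / 2)]

theorem one_div_256_le_pow_nine_add {a b : ℝ} (ha : 0 ≤ a) (hb : 0 ≤ b) (hab : a + b = 1) :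
    1 / 256 ≤ a ^ 9 + b ^ 9 := by
  have := add_pow_le ha hb 9
  rw [hab] at this
  norm_num at this
  linarith

theorem abs_pow_four_sub_le {a b : ℝ} (ha : 0 ≤ a) (hb : 0 ≤ b) (hab : a + b = 1) :
    |a ^ 4 - b ^ 4| ≤ 2 * (a ^ 5 + b ^ 5) := by
  wlog hba : b ≤ a generalizing a b
  · rw [abs_sub_comm, add_comm (a ^ 5)]
    exact this hb ha (by linarith) (by linarith)
  have : a ^ 4 ≤ 2 * a ^ 5 := by nlinarith [pow_nonneg ha 4]
  rw [abs_of_nonneg (sub_nonneg.2 (by gcongr))]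
  nlinarith [pow_nonneg hb 4, pow_nonneg hb 5]

theorem pow_seven_div_256_le {q S E a b : ℝ} (hq : 0 ≤ q) (hE : |E| ≤ q / 2 * S)
    (ha : 0 ≤ a) (hb : 0 ≤ b) (hab : a + b = 1) :
    q ^ 7 / 256 ≤
      (q ^ 3 * a ^ 4 + S) * (q ^ 4 * a ^ 5 + E) + (q ^ 3 * b ^ 4 + S) * (q ^ 4 * b ^ 5 - E) := by
  have cross : |E * (a ^ 4 - b ^ 4)| ≤ q * S * (a ^ 5 + b ^ 5) := by
    rw [abs_mul]
    calc |E| * |a ^ 4 - b ^ 4| ≤ q / 2 * S * (2 * (a ^ 5 + b ^ 5)) :=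
          mul_le_mul hE (abs_pow_four_sub_le ha hb hab) (abs_nonneg _) ((abs_nonneg E).trans hE)
      _ = q * S * (a ^ 5 + b ^ 5) := by ring
  have hcross := mul_le_mul_of_nonneg_left (abs_le.1 cross).1 (pow_nonneg hq 3)
  have hmain := mul_le_mul_of_nonneg_left (one_div_256_le_pow_nine_add ha hb hab) (pow_nonneg hq 7)
  linear_combination hcross + hmain

section Parametrization

variable {α : Type*} [AddCommGroup α] {p n : ℕ} [NeZero p]

abbrev PhiParams (α : Type*) := (α × α × α) × (α × α × α × α)

def phiSolOfParams (y : PhiParams α) : Fin 9 → α :=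
  ![y.1.1 - y.1.2.1 + y.1.2.2, y.1.1, y.1.2.1, y.1.2.2,
    y.2.1, y.2.2.1, y.2.2.2.1, y.2.2.2.2, y.2.2.1 + y.2.2.2.2 - y.2.1 - y.2.2.2.1]

def phiParamsOfSol (x : Fin 9 → α) : PhiParams α :=
  ((x 1, x 2, x 3), (x 4, x 5, x 6, x 7))

theorem phiSolOfParams_mem (y : PhiParams (G p n)) : phiSolOfParams y ∈ phiSols p n := by
  simp only [phiSols, mem_filter, mem_univ, true_and, phiSolOfParams, Matrix.cons_val_zero,
    Matrix.cons_val_one, Matrix.cons_val]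
  constructor <;> abel

theorem phiSolOfParams_phiParamsOfSol {x : Fin 9 → G p n} (hx : x ∈ phiSols p n) :
    phiSolOfParams (phiParamsOfSol x) = x := by
  obtain ⟨-, h₁, h₂⟩ := mem_filter.1 hx
  funext i
  fin_cases i <;> try rfl
  · show x 1 - x 2 + x 3 = x 0
    linear_combination -h₁
  · show x 5 + x 7 - x 4 - x 6 = x 8
    linear_combination -h₂

theorem prod_phiSolOfParams (f : α → ℝ) (y : PhiParams α) :
    ∏ i, f (phiSolOfParams y i) =
      (f (y.1.1 - y.1.2.1 + y.1.2.2) * f y.1.1 * f y.1.2.1 * f y.1.2.2) *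
        (f y.2.1 * f y.2.2.1 * f y.2.2.2.1 * f y.2.2.2.2 *
          f (y.2.2.1 + y.2.2.2.2 - y.2.1 - y.2.2.2.1)) := by
  simp only [phiSolOfParams, Fin.prod_univ_succ, Matrix.cons_val_zero, Matrix.cons_val_succ,
    univ_unique, Fin.default_eq_zero, Matrix.cons_val_fin_one, prod_const, card_singleton, pow_one]
  ring

theorem sum_phiSols_prod (f : G p n → ℝ) : ∑ x ∈ phiSols p n, ∏ i, f (x i) = Λ₄ f * Λ₅ f := by
  rw [sum_nbij' (g := fun y => ∏ i, f (phiSolOfParams y i)) phiParamsOfSol phiSolOfParams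
    (fun _ _ => mem_univ _) (fun y _ => phiSolOfParams_mem y)
    (fun _ hx => phiSolOfParams_phiParamsOfSol hx) (fun _ _ => rfl)
    (fun _ hx => by rw [phiSolOfParams_phiParamsOfSol hx])]
  simp only [prod_phiSolOfParams, Fintype.sum_prod_type, Λ₄, Λ₅, sum_mul]
  simp only [mul_sum]

theorem Tphi_eq (f : G p n → ℝ) :
    Tphi p n f = Λ₄ f * Λ₅ f / (Fintype.card (G p n) : ℝ) ^ 7 := by
  have hcard : ((phiSols p n).card : ℝ) = (Fintype.card (G p n) : ℝ) ^ 7 := by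
    have := sum_phiSols_prod (p := p) (n := n) fun _ => 1
    simp only [prod_const_one, sum_const, card_univ, nsmul_eq_mul, mul_one, Λ₄, Λ₅] at this
    rw [this]
    ring
  rw [Tphi, sum_phiSols_prod, hcard]

end Parametrization

theorem phi_is_common_general (p : ℕ) [NeZero p]
    (n : ℕ) (f : G p n → ℝ) (hf : ∀ x, 0 ≤ f x ∧ f x ≤ 1) :
    Tphi p n f + Tphi p n (fun x => 1 - f x) ≥ (2 : ℝ) ^ (-8 : ℤ) := by
  set q : ℝ := (Fintype.card (G p n) : ℝ)
  set m := (∑ x, f x) / q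
  set h : G p n → ℝ := fun x => f x - m
  have hq : 0 < q := Nat.cast_pos.2 Fintype.card_pos
  have hh : ∑ x, h x = 0 := by
    simp only [h, sum_sub_distrib, sum_const, card_univ, nsmul_eq_mul]
    exact sub_eq_zero.2 (mul_div_cancel₀ _ hq.ne').symm
  have hh' : ∑ x, (-h) x = 0 := by simp [hh]
  have hm₀ : 0 ≤ m := div_nonneg (sum_nonneg fun x _ => (hf x).1) hq.le
  have hm₁ : m ≤ 1 :=
    div_le_one_of_le₀ ((sum_le_sum fun x _ => (hf x).2).trans (by simp [q])) hq.le
  have hΛ₅ : |Λ₅ h| ≤ q / 2 * Λ₄ h := abs_Λ₅_le h (sum_sq_sub_mean_le f hf)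
  have hf_eq : f = fun x => m + h x := by ext; simp [h]
  have h1f : (fun x => 1 - f x) = fun x => (1 - m) + (-h) x := by ext; simp [h]
  rw [h1f, Tphi_eq, Tphi_eq, hf_eq, Λ₄_const_add _ _ hh, Λ₅_const_add _ _ hh, Λ₄_const_add _ _ hh',
    Λ₅_const_add _ _ hh', Λ₄_neg, Λ₅_neg, ← add_div, ge_iff_le, le_div_iff₀ (by positivity)]
  rw [show (2 : ℝ) ^ (-8 : ℤ) = 1 / 256 by norm_num]
  linarith [pow_seven_div_256_le hq.le hΛ₅ hm₀ (sub_nonneg.2 hm₁) (add_sub_cancel m 1)]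

theorem phi_is_common (p : ℕ) [NeZero p] (hp : p.Prime) (hodd : Odd p)
    (n : ℕ) (hn : 1 ≤ n) (f : G p n → ℝ) (hf : ∀ x, 0 ≤ f x ∧ f x ≤ 1) :
    Tphi p n f + Tphi p n (fun x => 1 - f x) ≥ (2 : ℝ) ^ (-8 : ℤ) :=
  phi_is_common_general p n f hf
end

section
/- Let p be an odd prime. There exists a constant c₀ > 0 such that for every n ≥ 1 and every f : 𝔽_p^n → ℝ with 0 ≤ f ≤ 1 and 𝔼f ≥ 0.45, we have T_Φ(f) ≥ c₀. (In other words, Φ is 0.45-prevalent.) -/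
open Finset

/-- `𝔼f`, the average of `f` over `𝔽_p^n`. -/
noncomputable def expect (p n : ℕ) [NeZero p] (f : G p n → ℝ) : ℝ :=
  (∑ x, f x) / (p : ℝ) ^ n

/-!
The argument works in any finite abelian group `α` of odd order `N`, such as `𝔽_p^n`.
Expanding both equations of `Φ` in additive characters of `α` gives
`N² · ∑_{Φ(x) = 0} ∏ f(xᵢ) = (∑_ψ |f̂ ψ|⁴) · (∑_ψ |f̂ ψ|⁴ Re f̂ ψ)`.
The first factor is at least `|f̂ 0|⁴ = (∑ f)⁴`. In the second, the trivial character contributes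
`(∑ f)⁵`. For `ψ ≠ 0` the odd order of `α` forces `2ψ ≠ 0`, and then `|f̂ ψ|² ≤ N²/8` when
`0 ≤ f ≤ 1`: writing `r = Re (conj (f̂ ψ) · ψ)`, we have `|f̂ ψ|² = ∑ f r ≤ ½ ∑ |r|` because
`∑ r = 0`, and `∑ r² = N |f̂ ψ|² / 2` because `∑ ψ² = 0`, so Cauchy–Schwarz applies. Using the
rational consequence `|f̂ ψ| ≤ 3N/8` and Parseval, the nontrivial characters cost at most
`(3N/8)³ (N ∑ f - (∑ f)²)`. For the density `a = 𝔼 f` this yields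
`T_Φ(f) ≥ a⁴ (a⁵ - (3/8)³ (a - a²))`, which is at least `10⁻⁴` once `a ≥ 0.45`.
-/

open ComplexConjugate

lemma AddChar.map_sum_eq_prod {A M ι : Type*} [AddCommMonoid A] [CommMonoid M] (ψ : AddChar A M)
    (s : Finset ι) (g : ι → A) : ψ (∑ i ∈ s, g i) = ∏ i ∈ s, ψ (g i) :=
  map_prod ψ.toMonoidHom (fun i => Multiplicative.ofAdd (g i)) s

lemma two_nsmul_ne_zero_of_odd_card {β : Type*} [AddGroup β] (hβ : Odd (Nat.card β)) {b : β}
    (hb : b ≠ 0) : 2 • b ≠ 0 := by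
  intro h
  apply hb
  apply (nsmulCoprime (Nat.coprime_two_right.mpr hβ)).injective
  simpa using h

lemma sum_mul_le_half_sum_abs {ι : Type*} [Fintype ι] {f r : ι → ℝ}
    (hf : ∀ i, 0 ≤ f i ∧ f i ≤ 1) (hr : ∑ i, r i = 0) :
    ∑ i, f i * r i ≤ (∑ i, |r i|) / 2 := by
  have key (i : ι) : f i * r i ≤ (r i + |r i|) / 2 := by
    rcases le_or_gt 0 (r i) with h | h
    · rw [abs_of_nonneg h]; nlinarith [hf i]
    · rw [abs_of_neg h]; nlinarith [hf i]
  calc ∑ i, f i * r i ≤ ∑ i, (r i + |r i|) / 2 := sum_le_sum fun i _ => key i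
    _ = (∑ i, |r i|) / 2 := by rw [← sum_div, sum_add_distrib, hr, zero_add]

lemma Complex.sq_re_eq_normSq_add_re_sq_div_two (u : ℂ) :
    u.re ^ 2 = (Complex.normSq u + (u ^ 2).re) / 2 := by
  simp only [sq, Complex.mul_re, Complex.normSq_apply]
  ring

section FiniteAbelianGroup

variable {α : Type*} [AddCommGroup α] [Fintype α]

noncomputable def dft (f : α → ℝ) (ψ : AddChar α ℂ) : ℂ := ∑ x, (f x : ℂ) * ψ x

lemma dft_zero (f : α → ℝ) : dft f 0 = ((∑ x, f x : ℝ) : ℂ) := by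
  simp [dft]

lemma dft_neg (f : α → ℝ) (ψ : AddChar α ℂ) : dft f (-ψ) = conj (dft f ψ) := by
  simp [dft, AddChar.neg_apply, AddChar.map_neg_eq_conj]

lemma dft_one [DecidableEq (AddChar α ℂ)] (ψ : AddChar α ℂ) :
    dft (fun _ => 1) ψ = if ψ = 0 then (Fintype.card α : ℂ) else 0 := by
  simpa [dft] using AddChar.sum_eq_ite ψ

lemma sum_normSq_dft [DecidableEq α] (f : α → ℝ) :
    ∑ ψ, Complex.normSq (dft f ψ) = Fintype.card α * ∑ x, f x ^ 2 := by
  have hψ (ψ : AddChar α ℂ) : (Complex.normSq (dft f ψ) : ℂ) =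
      ∑ x, ∑ y, (f x * f y : ℂ) * ψ (x - y) := by
    rw [← Complex.mul_conj, ← dft_neg, dft, dft, sum_mul_sum]
    simp [sub_eq_add_neg, AddChar.map_add_eq_mul, mul_mul_mul_comm]
  apply Complex.ofReal_injective
  push_cast
  calc ∑ ψ : AddChar α ℂ, (Complex.normSq (dft f ψ) : ℂ)
      = ∑ x, ∑ y, (f x * f y : ℂ) * ∑ ψ : AddChar α ℂ, ψ (x - y) := by
        simp_rw [hψ, mul_sum]
        rw [sum_comm]
        exact sum_congr rfl fun x _ => sum_comm
    _ = Fintype.card α * ∑ x, (f x : ℂ) ^ 2 := by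
        simp [AddChar.sum_apply_eq_ite, sub_eq_zero, mul_sum, sq, mul_comm]

lemma sum_re_mul_apply_sq (c : ℂ) {ψ : AddChar α ℂ} (hψ : 2 • ψ ≠ 0) :
    ∑ x, (c * ψ x).re ^ 2 = Fintype.card α * ‖c‖ ^ 2 / 2 := by
  have hsq : ∑ x, (c * ψ x) ^ 2 = 0 := by
    simp_rw [mul_pow, ← AddChar.nsmul_apply, ← mul_sum, AddChar.sum_eq_zero_iff_ne_zero.mpr hψ,
      mul_zero]
  simp_rw [Complex.sq_re_eq_normSq_add_re_sq_div_two, ← sum_div, sum_add_distrib, ← Complex.re_sum,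
    hsq, Complex.normSq_mul, Complex.normSq_eq_norm_sq, AddChar.norm_apply]
  simp

lemma eight_mul_sq_norm_dft_le {f : α → ℝ} (hf : ∀ x, 0 ≤ f x ∧ f x ≤ 1) {ψ : AddChar α ℂ}
    (hψ : ψ ≠ 0) (h2ψ : 2 • ψ ≠ 0) : 8 * ‖dft f ψ‖ ^ 2 ≤ Fintype.card α ^ 2 := by
  set z := dft f ψ
  set N : ℝ := (Fintype.card α : ℝ)
  set r : α → ℝ := fun x => (conj z * ψ x).re
  have hnorm : ‖z‖ ^ 2 = ∑ x, f x * r x := by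
    have hexp : conj z * z = ∑ x, (f x : ℂ) * (conj z * ψ x) := by
      simp only [z, dft, mul_sum, mul_left_comm]
    rw [← Complex.normSq_eq_norm_sq, ← Complex.ofReal_re (Complex.normSq z),
      Complex.normSq_eq_conj_mul_self, hexp, Complex.re_sum]
    simp only [Complex.re_ofReal_mul, r]
  have hr_sum : ∑ x, r x = 0 := by
    simp only [r, ← Complex.re_sum, ← mul_sum, AddChar.sum_eq_zero_iff_ne_zero.mpr hψ, mul_zero,
      Complex.zero_re]
  have hr_sq : ∑ x, r x ^ 2 = N * ‖z‖ ^ 2 / 2 := by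
    simpa only [Complex.norm_conj] using sum_re_mul_apply_sq (conj z) h2ψ
  have hhalf : ‖z‖ ^ 2 ≤ (∑ x, |r x|) / 2 := hnorm ▸ sum_mul_le_half_sum_abs hf hr_sum
  have hcs : (∑ x, |r x|) ^ 2 ≤ N * ∑ x, r x ^ 2 := by
    simpa using sq_sum_le_card_mul_sum_sq (s := univ) (f := fun x => |r x|)
  have hsq : 4 * (‖z‖ ^ 2) ^ 2 ≤ (∑ x, |r x|) ^ 2 := by
    nlinarith [sq_nonneg ‖z‖]
  rw [hr_sq] at hcs
  nlinarith [sq_nonneg ‖z‖]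

lemma norm_dft_le_of_odd_card (hα : Odd (Fintype.card α)) {f : α → ℝ}
    (hf : ∀ x, 0 ≤ f x ∧ f x ≤ 1) {ψ : AddChar α ℂ} (hψ : ψ ≠ 0) :
    ‖dft f ψ‖ ≤ 3 / 8 * Fintype.card α := by
  have h2ψ : 2 • ψ ≠ 0 := two_nsmul_ne_zero_of_odd_card
    (by rwa [Nat.card_eq_fintype_card, AddChar.card_eq]) hψ
  nlinarith [eight_mul_sq_norm_dft_le hf hψ h2ψ, norm_nonneg (dft f ψ)]

lemma card_pow_mul_indicator_eq_sum_prod {m k : ℕ} [DecidableEq α] (c : Fin m → Fin k → ℤ)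
    (x : Fin k → α) :
    (Fintype.card α : ℂ) ^ m * (if ∀ j, ∑ i, c j i • x i = 0 then 1 else 0)
      = ∑ ψ : Fin m → AddChar α ℂ, ∏ i, (∑ j, c j i • ψ j) (x i) := by
  calc _ = ∏ j, ∑ χ : AddChar α ℂ, χ (∑ i, c j i • x i) := by
        simp_rw [AddChar.sum_apply_eq_ite, prod_ite_zero, prod_const, card_univ, Fintype.card_fin]
        simp
    _ = ∑ ψ : Fin m → AddChar α ℂ, ∏ j, ψ j (∑ i, c j i • x i) := Fintype.prod_sum _
    _ = _ := by
        refine sum_congr rfl fun ψ _ => ?_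
        simp_rw [AddChar.map_sum_eq_prod, AddChar.map_zsmul_eq_zpow, AddChar.sum_apply,
          AddChar.zsmul_apply]
        exact prod_comm

lemma card_pow_mul_sum_solutions {m k : ℕ} [DecidableEq α] (c : Fin m → Fin k → ℤ)
    (f : α → ℝ) :
    (Fintype.card α : ℂ) ^ m *
        ∑ x ∈ univ.filter (fun x : Fin k → α => ∀ j, ∑ i, c j i • x i = 0), ∏ i, (f (x i) : ℂ)
      = ∑ ψ : Fin m → AddChar α ℂ, ∏ i, dft f (∑ j, c j i • ψ j) := by
  calc _ = ∑ x : Fin k → α, (∏ i, (f (x i) : ℂ)) *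
        ((Fintype.card α : ℂ) ^ m * if ∀ j, ∑ i, c j i • x i = 0 then 1 else 0) := by
        rw [sum_filter, mul_sum]
        refine sum_congr rfl fun x _ => ?_
        split_ifs <;> ring
    _ = ∑ ψ : Fin m → AddChar α ℂ, ∑ x : Fin k → α,
          ∏ i, (f (x i) : ℂ) * (∑ j, c j i • ψ j) (x i) := by
        simp_rw [card_pow_mul_indicator_eq_sum_prod, mul_sum, ← prod_mul_distrib]
        exact sum_comm
    _ = _ := by
        simp_rw [dft, Fintype.prod_sum]

variable (α) in
def phiSolutions [DecidableEq α] : Finset (Fin 9 → α) :=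
  univ.filter fun x => x 0 - x 1 + x 2 - x 3 = 0 ∧ x 4 - x 5 + x 6 - x 7 + x 8 = 0

def phiCoeffs : Fin 2 → Fin 9 → ℤ :=
  ![![1, -1, 1, -1, 0, 0, 0, 0, 0], ![0, 0, 0, 0, 1, -1, 1, -1, 1]]

lemma phiSolutions_eq_filter [DecidableEq α] :
    phiSolutions α = univ.filter fun x : Fin 9 → α => ∀ j, ∑ i, phiCoeffs j i • x i = 0 := by
  ext x
  simp [phiSolutions, phiCoeffs, Fin.forall_fin_two, Fin.sum_univ_succ, sub_eq_add_neg, add_assoc]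

lemma card_sq_mul_sum_phiSolutions [DecidableEq α] (f : α → ℝ) :
    (Fintype.card α : ℝ) ^ 2 * ∑ x ∈ phiSolutions α, ∏ i, f (x i)
      = (∑ ψ, ‖dft f ψ‖ ^ 4) * ∑ ψ, ‖dft f ψ‖ ^ 4 * (dft f ψ).re := by
  have hprod (ψ : Fin 2 → AddChar α ℂ) :
      ∏ i, dft f (∑ j, phiCoeffs j i • ψ j)
        = ((‖dft f (ψ 0)‖ ^ 4 : ℝ) : ℂ) * (((‖dft f (ψ 1)‖ ^ 4 : ℝ) : ℂ) * dft f (ψ 1)) := by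
    have h4 (z : ℂ) : (‖z‖ : ℂ) ^ 4 = (z * conj z) ^ 2 := by rw [Complex.mul_conj']; ring
    simp [phiCoeffs, Fin.prod_univ_succ, Fin.sum_univ_two, dft_neg, h4]
    ring
  have h := card_pow_mul_sum_solutions phiCoeffs f
  rw [← phiSolutions_eq_filter] at h
  simp_rw [hprod] at h
  rw [← Fintype.sum_equiv (finTwoArrowEquiv _).symm _ _ fun _ => rfl, Fintype.sum_prod_type] at h
  simp only [finTwoArrowEquiv_symm_apply, Matrix.cons_val_zero, Matrix.cons_val_one,
    ← sum_mul_sum] at h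
  have hN : ((Fintype.card α : ℂ) ^ 2).re = (Fintype.card α : ℝ) ^ 2 := by norm_cast
  simpa [hN, Complex.re_sum, ← Complex.ofReal_pow, ← Complex.ofReal_prod, ← Complex.ofReal_sum]
    using congrArg Complex.re h

lemma card_phiSolutions [DecidableEq α] : ((phiSolutions α).card : ℝ) = Fintype.card α ^ 7 := by
  have h := card_sq_mul_sum_phiSolutions (fun _ : α => (1 : ℝ))
  simp only [prod_const_one, sum_const, nsmul_eq_mul, mul_one, dft_one] at h
  simp only [apply_ite, RCLike.norm_natCast, norm_zero, ite_pow, ne_eq, OfNat.ofNat_ne_zero,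
    not_false_eq_true, zero_pow, sum_ite_eq', mem_univ, ↓reduceIte, Complex.natCast_re,
    Complex.zero_re, ite_mul, zero_mul, mul_zero] at h
  have hN : (Fintype.card α : ℝ) ≠ 0 := Nat.cast_ne_zero.mpr Fintype.card_ne_zero
  exact mul_left_cancel₀ (pow_ne_zero 2 hN) (h.trans (by ring))

lemma pow_four_sum_le_sum_norm_dft_pow_four (f : α → ℝ) :
    (∑ x, f x) ^ 4 ≤ ∑ ψ, ‖dft f ψ‖ ^ 4 := by
  have h0 : ‖dft f 0‖ ^ 4 = (∑ x, f x) ^ 4 := by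
    rw [dft_zero, Complex.norm_real, Real.norm_eq_abs, (by norm_num : 4 = 2 * 2), pow_mul, sq_abs,
      pow_mul]
  exact h0 ▸ single_le_sum (f := fun ψ => ‖dft f ψ‖ ^ 4) (fun ψ _ => by positivity)
    (mem_univ (0 : AddChar α ℂ))

lemma sum_norm_dft_pow_four_mul_re_ge [DecidableEq α] (f : α → ℝ) {B : ℝ}
    (hB : ∀ ψ ≠ 0, ‖dft f ψ‖ ≤ B) :
    (∑ x, f x) ^ 5 - B ^ 3 * (Fintype.card α * ∑ x, f x ^ 2 - (∑ x, f x) ^ 2)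
      ≤ ∑ ψ, ‖dft f ψ‖ ^ 4 * (dft f ψ).re := by
  set s := ∑ x, f x
  have hzero : ‖dft f 0‖ ^ 2 = s ^ 2 := by
    rw [dft_zero, Complex.norm_real, Real.norm_eq_abs, sq_abs]
  have hparseval : ∑ ψ ∈ univ.erase 0, ‖dft f ψ‖ ^ 2 = Fintype.card α * ∑ x, f x ^ 2 - s ^ 2 := by
    rw [← sum_normSq_dft, ← add_sum_erase _ _ (mem_univ 0)]
    simp_rw [Complex.normSq_eq_norm_sq, hzero]
    ring
  have hterm (ψ : AddChar α ℂ) (hψ : ψ ≠ 0) :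
      -(B ^ 3 * ‖dft f ψ‖ ^ 2) ≤ ‖dft f ψ‖ ^ 4 * (dft f ψ).re := by
    have h3 : ‖dft f ψ‖ ^ 3 ≤ B ^ 3 := pow_le_pow_left₀ (norm_nonneg _) (hB ψ hψ) 3
    have hre : -‖dft f ψ‖ ≤ (dft f ψ).re := neg_le_of_abs_le (Complex.abs_re_le_norm _)
    nlinarith [mul_le_mul_of_nonneg_left hre (pow_nonneg (norm_nonneg (dft f ψ)) 4),
      mul_le_mul_of_nonneg_right h3 (sq_nonneg ‖dft f ψ‖)]
  have hfirst : ‖dft f 0‖ ^ 4 * (dft f 0).re = s ^ 5 := by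
    rw [(by norm_num : 4 = 2 * 2), pow_mul, hzero, dft_zero, Complex.ofReal_re]
    ring
  calc s ^ 5 - B ^ 3 * (Fintype.card α * ∑ x, f x ^ 2 - s ^ 2)
      = s ^ 5 + ∑ ψ ∈ univ.erase 0, -(B ^ 3 * ‖dft f ψ‖ ^ 2) := by
        rw [← hparseval, sum_neg_distrib, mul_sum, sub_eq_add_neg]
    _ ≤ ‖dft f 0‖ ^ 4 * (dft f 0).re + ∑ ψ ∈ univ.erase 0, ‖dft f ψ‖ ^ 4 * (dft f ψ).re :=
        add_le_add hfirst.ge (sum_le_sum fun ψ hψ => hterm ψ (ne_of_mem_erase hψ))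
    _ = ∑ ψ, ‖dft f ψ‖ ^ 4 * (dft f ψ).re :=
        add_sum_erase _ (fun ψ => ‖dft f ψ‖ ^ 4 * (dft f ψ).re) (mem_univ _)

noncomputable def mean (f : α → ℝ) : ℝ := (∑ x, f x) / Fintype.card α

noncomputable def phiAverage [DecidableEq α] (f : α → ℝ) : ℝ :=
  (∑ x ∈ phiSolutions α, ∏ i, f (x i)) / (phiSolutions α).card

noncomputable def phiLowerBound (a : ℝ) : ℝ := a ^ 4 * (a ^ 5 - (3 / 8) ^ 3 * (a - a ^ 2))

lemma phiLowerBound_ge {a : ℝ} (ha : 0.45 ≤ a) : 0.0001 ≤ phiLowerBound a := by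
  rw [phiLowerBound]
  nlinarith [pow_le_pow_left₀ (by norm_num) ha 9, pow_le_pow_left₀ (by norm_num) ha 4,
    sq_nonneg (a - 0.45), sq_nonneg a]

lemma phiLowerBound_mean_le_phiAverage [DecidableEq α] (hα : Odd (Fintype.card α)) {f : α → ℝ}
    (hf : ∀ x, 0 ≤ f x ∧ f x ≤ 1) : phiLowerBound (mean f) ≤ phiAverage f := by
  set N : ℝ := (Fintype.card α : ℝ)
  set s := ∑ x, f x
  set num := ∑ x ∈ phiSolutions α, ∏ i, f (x i)
  have hN : 0 < N := Nat.cast_pos.mpr Fintype.card_pos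
  set L := s ^ 5 - (3 / 8 * N) ^ 3 * (N * s - s ^ 2)
  have hL : L ≤ ∑ ψ, ‖dft f ψ‖ ^ 4 * (dft f ψ).re := by
    refine le_trans ?_ (sum_norm_dft_pow_four_mul_re_ge f fun ψ => norm_dft_le_of_odd_card hα hf)
    show L ≤ s ^ 5 - (3 / 8 * N) ^ 3 * (N * ∑ x, f x ^ 2 - s ^ 2)
    have hsq : ∑ x, f x ^ 2 ≤ s := sum_le_sum fun x _ => by nlinarith [hf x]
    have := mul_le_mul_of_nonneg_left (mul_le_mul_of_nonneg_left hsq hN.le)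
      (by positivity : 0 ≤ (3 / 8 * N) ^ 3)
    simp only [L]
    linarith
  have key : s ^ 4 * L ≤ N ^ 2 * num := by
    rcases le_or_gt L 0 with hL0 | hL0
    · have hnum : 0 ≤ num := sum_nonneg fun x _ => prod_nonneg fun i _ => (hf _).1
      exact (mul_nonpos_of_nonneg_of_nonpos (by positivity) hL0).trans (by positivity)
    · rw [card_sq_mul_sum_phiSolutions]
      calc s ^ 4 * L ≤ s ^ 4 * ∑ ψ, ‖dft f ψ‖ ^ 4 * (dft f ψ).re :=
            mul_le_mul_of_nonneg_left hL (by positivity)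
        _ ≤ _ := mul_le_mul_of_nonneg_right (pow_four_sum_le_sum_norm_dft_pow_four f)
            (hL0.le.trans hL)
  rw [phiAverage, card_phiSolutions, le_div_iff₀ (by positivity)]
  calc phiLowerBound (mean f) * N ^ 7 = s ^ 4 * L / N ^ 2 := by
        simp only [phiLowerBound, mean, L]
        field_simp
        ring
    _ ≤ num := by rwa [div_le_iff₀ (by positivity), mul_comm num]

end FiniteAbelianGroup

theorem phi_prevalent_general (p : ℕ) [NeZero p] (hodd : Odd p) :
    ∃ c₀ > (0 : ℝ), ∀ n ≥ 1, ∀ f : G p n → ℝ, (∀ x, 0 ≤ f x ∧ f x ≤ 1) →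
      expect p n f ≥ 0.45 → Tphi p n f ≥ c₀ := by
  refine ⟨0.0001, by norm_num, fun n _ f hf hmean => ?_⟩
  have hcard : Fintype.card (G p n) = p ^ n := by simp
  have hexpect : expect p n f = mean f := by rw [mean, hcard, Nat.cast_pow]; rfl
  calc Tphi p n f = phiAverage f := rfl
    _ ≥ phiLowerBound (mean f) := phiLowerBound_mean_le_phiAverage (hcard ▸ hodd.pow) hf
    _ ≥ 0.0001 := phiLowerBound_ge (hexpect ▸ hmean)

theorem phi_prevalent (p : ℕ) [NeZero p] (hp : p.Prime) (hodd : Odd p) :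
    ∃ c₀ > (0 : ℝ), ∀ n ≥ 1, ∀ f : G p n → ℝ, (∀ x, 0 ≤ f x ∧ f x ≤ 1) →
      expect p n f ≥ 0.45 → Tphi p n f ≥ c₀ :=
  phi_prevalent_general p hodd
end

section
/- Let p be an odd prime. For every n ≥ 1 and every f : 𝔽_p^n → ℝ with 0 ≤ f ≤ 1 and 𝔼f = 1/2, we have T(f) + T(1 − f) ≥ 2⁻³, where T(f) = 𝔼_{x,d,y ∈ 𝔽_p^n} f(x)·f(x+d)·f(x+2d)·f(y). (In other words, the system obtained by adding one free variable to a three-term arithmetic progression is common among functions of mean 1/2, even though it is not common in general.) -/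
open Finset

/-- The normalised count of 3-term arithmetic progressions together with one free
variable: `T(f) = 𝔼_{x,d,y} f(x)·f(x+d)·f(x+2d)·f(y)`. -/
noncomputable def T3APfree (p n : ℕ) [NeZero p] (f : G p n → ℝ) : ℝ :=
  (∑ x : G p n, ∑ d : G p n, ∑ y : G p n, f x * f (x + d) * f (x + d + d) * f y) /
    (p : ℝ) ^ (3 * n)

/-!
Write `S = ∑ f`, `N = p^n` and `Λ(f) = ∑_{x,d} f(x) f(x+d) f(x+2d)`, so that
`T(f) = Λ(f) S / N³`. Since doubling is a bijection of `𝔽_p^n`, any two of `x, x + d, x + 2d`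
range independently over the group, so expanding `(1-a)(1-b)(1-c) + abc = 1 - a - b - c + ab +
bc + ca` gives `Λ(f) + Λ(1-f) = N² - 3NS + 3S²`. When `S = N/2` the free-variable factors `S`
and `N - S` agree, so `Λ(f)` cancels from `T(f) + T(1-f)`, which equals `2⁻³` exactly.
-/

open Function

lemma bijective_add_self_of_odd_card {A : Type*} [AddGroup A] (hG : Odd (Nat.card A)) :
    Bijective fun d : A => d + d := by
  simpa only [two_nsmul] using
    Nat.Coprime.nsmul_right_bijective (G := A) (Nat.coprime_two_right.mpr hG)

section ThreeAP

variable {A : Type*} [AddCommGroup A] [Fintype A]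

noncomputable def threeAPSum (f : A → ℝ) : ℝ := ∑ x, ∑ d, f x * f (x + d) * f (x + d + d)

lemma sum_sum_mul_comp_add (f g : A → ℝ) {φ : A → A} (hφ : Bijective φ) :
    ∑ x, ∑ d, f x * g (x + φ d) = (∑ x, f x) * ∑ x, g x := by
  have inner (x : A) : ∑ d, g (x + φ d) = ∑ y, g y :=
    Fintype.sum_bijective _ ((Equiv.addLeft x).bijective.comp hφ) _ _ fun _ => rfl
  simp only [← mul_sum, inner, sum_mul]

lemma sum_sum_comp_add (g : A → ℝ) {φ : A → A} (hφ : Bijective φ) :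
    ∑ x, ∑ d, g (x + φ d) = Fintype.card A * ∑ x, g x := by
  simpa using sum_sum_mul_comp_add 1 g hφ

lemma sum_sum_mul_add_add_self (f g : A → ℝ) :
    ∑ x, ∑ d, f (x + d) * g (x + d + d) = (∑ x, f x) * ∑ x, g x := by
  have inner (d : A) : ∑ x, f (x + d) * g (x + d + d) = ∑ x, f x * g (x + d) :=
    Equiv.sum_comp (Equiv.addRight d) fun u => f u * g (u + d)
  rw [sum_comm, sum_congr rfl fun d _ => inner d, sum_comm]
  exact sum_sum_mul_comp_add f g bijective_id

lemma threeAPSum_add_threeAPSum_one_sub (hG : Odd (Nat.card A)) (f : A → ℝ) :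
    threeAPSum f + threeAPSum (fun x => 1 - f x) =
      (Fintype.card A : ℝ) ^ 2 - 3 * Fintype.card A * ∑ x, f x + 3 * (∑ x, f x) ^ 2 := by
  have h2 := bijective_add_self_of_odd_card hG
  have expand : threeAPSum f + threeAPSum (fun x => 1 - f x) = ∑ x, ∑ d,
      (1 - f x - f (x + d) - f (x + d + d) + f x * f (x + d) + f x * f (x + d + d) +
        f (x + d) * f (x + d + d)) := by
    simp only [threeAPSum, ← sum_add_distrib]
    exact sum_congr rfl fun x _ => sum_congr rfl fun d _ => by ring
  have hxd := sum_sum_comp_add f bijective_id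
  have hx2d := sum_sum_comp_add f h2
  have hxxd := sum_sum_mul_comp_add f f bijective_id
  have hxx2d := sum_sum_mul_comp_add f f h2
  simp only [id, ← add_assoc] at hxd hx2d hxxd hxx2d
  rw [expand]
  simp only [sum_add_distrib, sum_sub_distrib, hxd, hx2d, hxxd, hxx2d, sum_sum_mul_add_add_self]
  simp only [sum_const, card_univ, nsmul_eq_mul, mul_one, ← mul_sum]
  ring

end ThreeAP

lemma T3APfree_eq_threeAPSum_mul_sum (p n : ℕ) [NeZero p] (f : G p n → ℝ) :
    T3APfree p n f = threeAPSum f * (∑ x, f x) / ((p : ℝ) ^ n) ^ 3 := by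
  simp only [T3APfree, threeAPSum, ← pow_mul, mul_comm n, ← mul_sum, sum_mul]

lemma odd_natCard_G {p : ℕ} (hodd : Odd p) (n : ℕ) : Odd (Nat.card (G p n)) := by
  rw [Nat.card_fun, Nat.card_zmod, Nat.card_fin]
  exact hodd.pow

theorem threeAP_free_common_at_half_general (p : ℕ) [NeZero p] (hodd : Odd p)
    (n : ℕ) (f : G p n → ℝ)
    (hmean : expect p n f = 1 / 2) :
    T3APfree p n f + T3APfree p n (fun x => 1 - f x) ≥ (2 : ℝ) ^ (-3 : ℤ) := by
  set N : ℝ := (p : ℝ) ^ n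
  have hN : 0 < N := by have := NeZero.pos p; positivity
  have hcard : (Fintype.card (G p n) : ℝ) = N := by simp [N]
  have hS : ∑ x, f x = N / 2 := by
    change (∑ x, f x) / N = 1 / 2 at hmean
    rw [div_eq_iff hN.ne'] at hmean
    linarith
  have hcompl : ∑ x, (1 - f x) = N / 2 := by
    rw [sum_sub_distrib, sum_const, card_univ, nsmul_eq_mul, mul_one, hcard, hS]
    ring
  have hΛ := threeAPSum_add_threeAPSum_one_sub (odd_natCard_G hodd n) f
  rw [hcard, hS] at hΛ
  have hsum : T3APfree p n f + T3APfree p n (fun x => 1 - f x) = 1 / 8 := by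
    rw [T3APfree_eq_threeAPSum_mul_sum, T3APfree_eq_threeAPSum_mul_sum, hS, hcompl, ← add_div,
      ← add_mul, hΛ]
    change _ / N ^ 3 = _
    field_simp
    ring
  rw [hsum]
  norm_num

theorem threeAP_free_common_at_half (p : ℕ) [NeZero p] (hp : p.Prime) (hodd : Odd p)
    (n : ℕ) (hn : 1 ≤ n) (f : G p n → ℝ) (hf : ∀ x, 0 ≤ f x ∧ f x ≤ 1)
    (hmean : expect p n f = 1 / 2) :
    T3APfree p n f + T3APfree p n (fun x => 1 - f x) ≥ (2 : ℝ) ^ (-3 : ℤ) :=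
  threeAP_free_common_at_half_general p hodd n f hmean
end

section
/- Let p be an odd prime and n ≥ 1. For every f : 𝔽_p^n → ℝ, writing α = 𝔼f and g = f − α, we have T_Φ(f) + T_Φ(1 − f) = α⁹ + (1−α)⁹ + (α⁵ + (1−α)⁵)·T_{A₄}(g) + (α⁴ − (1−α)⁴)·T_{A₅}(g). -/
open Finset

/-- The set of solutions of `x₁ - x₂ + x₃ - x₄ = 0` in `(𝔽_p^n)^4`. -/
def a4Sols (p n : ℕ) [NeZero p] : Finset (Fin 4 → G p n) :=
  Finset.univ.filter fun x => x 0 - x 1 + x 2 - x 3 = 0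

/-- The set of solutions of `x₁ - x₂ + x₃ - x₄ + x₅ = 0` in `(𝔽_p^n)^5`. -/
def a5Sols (p n : ℕ) [NeZero p] : Finset (Fin 5 → G p n) :=
  Finset.univ.filter fun x => x 0 - x 1 + x 2 - x 3 + x 4 = 0

/-- `T_{A₄}(g)`: the average of `g(x₁)g(x₂)g(x₃)g(x₄)` over solutions of
`x₁ - x₂ + x₃ - x₄ = 0`. -/
noncomputable def TA4 (p n : ℕ) [NeZero p] (g : G p n → ℝ) : ℝ :=
  (∑ x ∈ a4Sols p n, ∏ i, g (x i)) / (a4Sols p n).card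

/-- `T_{A₅}(g)`: the average of `g(x₁)⋯g(x₅)` over solutions of
`x₁ - x₂ + x₃ - x₄ + x₅ = 0`. -/
noncomputable def TA5 (p n : ℕ) [NeZero p] (g : G p n → ℝ) : ℝ :=
  (∑ x ∈ a5Sols p n, ∏ i, g (x i)) / (a5Sols p n).card

/-!
The system `Φ` consists of the equations `A₄` and `A₅` on disjoint sets of variables, so
`T_Φ = T_{A₄} · T_{A₅}`. Writing the equations as `x₁ + x₃ = x₂ + x₄` and
`x₁ + x₃ + x₅ = x₂ + x₄` turns both counts into sums of convolutions:
`∑ₜ (h ∗ h)(t)²` and `∑ₜ (h ∗ h ∗ h)(t) (h ∗ h)(t)`. The convolution of `a + u` with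
`b + v`, where `u` and `v` have mean zero, is the constant `|G| a b` plus `u ∗ v`; hence
`T_{A_k}(a + g) = a^k + T_{A_k}(g)` for `g` of mean zero. Apply this to `f = α + g` and
`1 - f = (1 - α) - g`, where the sign of `-g` is invisible to `T_{A₄}` and flips `T_{A₅}`:
the cross terms `± T_{A₄}(g) T_{A₅}(g)` cancel.
-/

section Convolution

variable {A : Type*} [Fintype A]

lemma sum_const_add_mul_const_add_s13 {u v : A → ℝ} (hu : ∑ x, u x = 0) (hv : ∑ x, v x = 0)
    (a b : ℝ) :
    ∑ x, (a + u x) * (b + v x) = Fintype.card A * a * b + ∑ x, u x * v x := by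
  simp only [add_mul, mul_add, sum_add_distrib, ← mul_sum, ← sum_mul, hu, hv,
    sum_const, card_univ, nsmul_eq_mul]
  ring

variable [AddCommGroup A]

noncomputable def addConv (u v : A → ℝ) (t : A) : ℝ := ∑ a, u a * v (t - a)

lemma sum_addConv (u v : A → ℝ) : ∑ t, addConv u v t = (∑ a, u a) * ∑ a, v a := by
  simp only [addConv, sum_mul_sum]
  rw [sum_comm]
  refine sum_congr rfl fun a _ => ?_
  rw [← mul_sum, ← mul_sum, ← Equiv.sum_comp (Equiv.subRight a) v]
  rfl

lemma addConv_const_add {u v : A → ℝ} (hu : ∑ x, u x = 0) (hv : ∑ x, v x = 0) (a b : ℝ) :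
    addConv (fun x => a + u x) (fun x => b + v x) =
      fun t => Fintype.card A * a * b + addConv u v t := by
  ext t
  have hv' : ∑ x, v (t - x) = 0 := (Equiv.sum_comp (Equiv.subLeft t) v).trans hv
  exact sum_const_add_mul_const_add_s13 hu hv' a b

end Convolution

section SolutionSums

variable {p n : ℕ} [NeZero p]

lemma sum_a4Sols_eq_sum_addConv (h : G p n → ℝ) :
    ∑ x ∈ a4Sols p n, ∏ i, h (x i) = ∑ t, addConv h h t * addConv h h t := by
  simp only [addConv, sum_mul, mul_sum, ← Fintype.sum_prod_type']
  refine sum_nbij' (fun x => (x 0 + x 2, x 1, x 0))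
    (fun y => ![y.2.2, y.2.1, y.1 - y.2.2, y.1 - y.2.1]) (by simp) ?_ (fun x hx => ?_) (by simp)
    (fun x hx => ?_)
  · intro y _
    simp [a4Sols]
  all_goals
    have hx3 : x 3 = x 0 + x 2 - x 1 := by
      simp only [a4Sols, mem_filter] at hx
      linear_combination -hx.2
  · ext i
    fin_cases i <;> simp [hx3]
  · simp only [Fin.prod_univ_four, hx3, add_sub_cancel_left]
    ring

lemma sum_a5Sols_eq_sum_addConv (h : G p n → ℝ) :
    ∑ x ∈ a5Sols p n, ∏ i, h (x i) = ∑ t, addConv h (addConv h h) t * addConv h h t := by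
  simp only [addConv, sum_mul, mul_sum, ← Fintype.sum_prod_type']
  refine sum_nbij' (fun x => (x 1 + x 3, x 1, x 0, x 2))
    (fun y => ![y.2.2.1, y.2.1, y.2.2.2, y.1 - y.2.1, y.1 - y.2.2.1 - y.2.2.2]) (by simp) ?_
    (fun x hx => ?_) (by simp) (fun x hx => ?_)
  · intro y _
    simp only [a5Sols, mem_filter, mem_univ, Matrix.cons_val_zero,
      Matrix.cons_val_one, Matrix.cons_val, true_and]
    ring
  all_goals
    have hx4 : x 4 = x 1 + x 3 - x 0 - x 2 := by
      simp only [a5Sols, mem_filter] at hx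
      linear_combination hx.2
  · ext i
    fin_cases i <;> simp [hx4]
  · simp only [Fin.prod_univ_five, hx4, add_sub_cancel_left]
    ring

lemma sum_phiSols_eq_mul (h : G p n → ℝ) :
    ∑ x ∈ phiSols p n, ∏ i, h (x i) =
      (∑ x ∈ a4Sols p n, ∏ i, h (x i)) * ∑ x ∈ a5Sols p n, ∏ i, h (x i) := by
  rw [sum_mul_sum, ← sum_product']
  refine sum_equiv (Fin.appendEquiv 4 5).symm (fun x => ?_) (fun x _ => ?_)
  · simp only [phiSols, a4Sols, a5Sols, mem_filter, mem_product, mem_univ, true_and]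
    exact Iff.rfl
  · exact Fin.prod_univ_add (a := 4) (b := 5) (fun i => h (x i))

lemma Tphi_eq_TA4_mul_TA5 (h : G p n → ℝ) : Tphi p n h = TA4 p n h * TA5 p n h := by
  have hcard := sum_phiSols_eq_mul (p := p) (n := n) fun _ => 1
  simp only [prod_const_one, sum_const, nsmul_one] at hcard
  rw [Tphi, TA4, TA5, sum_phiSols_eq_mul, hcard]
  ring

lemma card_G : (Fintype.card (G p n) : ℝ) = (p : ℝ) ^ n := by simp

lemma card_a4Sols : ((a4Sols p n).card : ℝ) = ((p : ℝ) ^ n) ^ 3 := by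
  have h := sum_a4Sols_eq_sum_addConv (p := p) (n := n) fun _ => 1
  simp only [prod_const_one, sum_const, nsmul_eq_mul, mul_one, addConv, card_univ, card_G] at h
  rw [h]
  ring

lemma card_a5Sols : ((a5Sols p n).card : ℝ) = ((p : ℝ) ^ n) ^ 4 := by
  have h := sum_a5Sols_eq_sum_addConv (p := p) (n := n) fun _ => 1
  simp only [prod_const_one, sum_const, nsmul_eq_mul, mul_one, addConv, card_univ, card_G] at h
  rw [h]
  ring

lemma TA4_eq_sum_addConv (h : G p n → ℝ) :
    TA4 p n h = (∑ t, addConv h h t * addConv h h t) / ((p : ℝ) ^ n) ^ 3 := by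
  rw [TA4, sum_a4Sols_eq_sum_addConv, card_a4Sols]

lemma TA5_eq_sum_addConv (h : G p n → ℝ) :
    TA5 p n h = (∑ t, addConv h (addConv h h) t * addConv h h t) / ((p : ℝ) ^ n) ^ 4 := by
  rw [TA5, sum_a5Sols_eq_sum_addConv, card_a5Sols]

lemma TA4_neg (g : G p n → ℝ) : TA4 p n (fun x => -g x) = TA4 p n g := by
  norm_num [TA4, prod_neg]

lemma TA5_neg (g : G p n → ℝ) : TA5 p n (fun x => -g x) = -TA5 p n g := by
  norm_num [TA5, prod_neg, neg_div]

lemma sum_sub_expect (f : G p n → ℝ) : ∑ x, (f x - expect p n f) = 0 := by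
  rw [sum_sub_distrib, sum_const, card_univ, nsmul_eq_mul, card_G]
  unfold _root_.expect
  rw [mul_div_cancel₀ _ (pow_ne_zero n (NeZero.ne _)), sub_self]

lemma TA4_const_add {g : G p n → ℝ} (hg : ∑ x, g x = 0) (a : ℝ) :
    TA4 p n (fun x => a + g x) = a ^ 4 + TA4 p n g := by
  have hgg : ∑ t, addConv g g t = 0 := by rw [sum_addConv, hg, zero_mul]
  rw [TA4_eq_sum_addConv, TA4_eq_sum_addConv, addConv_const_add hg hg,
    sum_const_add_mul_const_add_s13 hgg hgg, card_G]
  field_simp [pow_ne_zero n (NeZero.ne (p : ℝ))]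

lemma TA5_const_add {g : G p n → ℝ} (hg : ∑ x, g x = 0) (a : ℝ) :
    TA5 p n (fun x => a + g x) = a ^ 5 + TA5 p n g := by
  have hgg : ∑ t, addConv g g t = 0 := by rw [sum_addConv, hg, zero_mul]
  have hggg : ∑ t, addConv g (addConv g g) t = 0 := by rw [sum_addConv, hg, zero_mul]
  rw [TA5_eq_sum_addConv, TA5_eq_sum_addConv, addConv_const_add hg hg, addConv_const_add hg hgg,
    sum_const_add_mul_const_add_s13 hggg hgg, card_G]
  field_simp [pow_ne_zero n (NeZero.ne (p : ℝ))]

end SolutionSums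

theorem phi_decomposition_general (p : ℕ) [NeZero p] (n : ℕ) (f : G p n → ℝ) :
    Tphi p n f + Tphi p n (fun x => 1 - f x) =
      (expect p n f) ^ 9 + (1 - expect p n f) ^ 9 +
        ((expect p n f) ^ 5 + (1 - expect p n f) ^ 5) *
          TA4 p n (fun x => f x - expect p n f) +
        ((expect p n f) ^ 4 - (1 - expect p n f) ^ 4) *
          TA5 p n (fun x => f x - expect p n f) := by
  set α := expect p n f
  set g := fun x => f x - α
  have hg : ∑ x, g x = 0 := sum_sub_expect f
  have hg' : ∑ x, -g x = 0 := by rw [sum_neg_distrib, hg, neg_zero]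
  have hf : f = fun x => α + g x := by simp [g]
  have hf' : (fun x => 1 - f x) = fun x => (1 - α) + -g x := by ext; simp [g]
  rw [Tphi_eq_TA4_mul_TA5, Tphi_eq_TA4_mul_TA5, hf', TA4_const_add hg', TA5_const_add hg',
    TA4_neg, TA5_neg, hf, TA4_const_add hg, TA5_const_add hg]
  ring

theorem phi_decomposition (p : ℕ) [NeZero p] (hp : p.Prime) (hodd : Odd p)
    (n : ℕ) (hn : 1 ≤ n) (f : G p n → ℝ) :
    Tphi p n f + Tphi p n (fun x => 1 - f x) =
      (expect p n f) ^ 9 + (1 - expect p n f) ^ 9 +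
        ((expect p n f) ^ 5 + (1 - expect p n f) ^ 5) *
          TA4 p n (fun x => f x - expect p n f) +
        ((expect p n f) ^ 4 - (1 - expect p n f) ^ 4) *
          TA5 p n (fun x => f x - expect p n f) :=
  phi_decomposition_general p n f
end

section
/- Let p be a prime and let M be an m × t matrix over 𝔽_p of rank m with m < t, such that for each coordinate i ∈ {1,…,t} the kernel of M in 𝔽_p^t is not contained in the hyperplane {v : v_i = 0}. If the system M is 1/2-prevalent and weakly Alon, then it is geometrically common. (Equivalently, the proved direction of Proposition 4.5: a 1/2-prevalent system that is not geometrically common is not weakly Alon.) -/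
open Finset

/-- The set of solutions in `(𝔽_p^n)^t` of the linear system given by the matrix `M`. -/
def sols (p : ℕ) [NeZero p] {m t : ℕ} (M : Matrix (Fin m) (Fin t) (ZMod p)) (n : ℕ) :
    Finset (Fin t → G p n) :=
  Finset.univ.filter fun x => ∀ j, ∑ i, M j i • x i = 0

/-- `T_M(f)`: the average of `∏ᵢ f(xᵢ)` over solutions of the system `M`. -/
noncomputable def TM (p : ℕ) [NeZero p] {m t : ℕ} (M : Matrix (Fin m) (Fin t) (ZMod p))
    (n : ℕ) (f : G p n → ℝ) : ℝ :=
  (∑ x ∈ sols p M n, ∏ i, f (x i)) / (sols p M n).card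

/-- The system `M` is `1/2`-prevalent: there is `c > 0` such that every `[0,1]`-valued
function of mean `1/2` has solution density at least `c`. -/
def IsHalfPrevalent (p : ℕ) [NeZero p] {m t : ℕ} (M : Matrix (Fin m) (Fin t) (ZMod p)) :
    Prop :=
  ∃ c > (0 : ℝ), ∀ n ≥ 1, ∀ f : G p n → ℝ, (∀ x, 0 ≤ f x ∧ f x ≤ 1) →
    expect p n f = 1 / 2 → TM p M n f ≥ c

/-- The system `M` is geometrically common: for every `[0,1]`-valued function of
mean `1/2`, the product `T_M(f)·T_M(1−f)` is at least `2^{−2t}`. -/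
def IsGeometricallyCommon (p : ℕ) [NeZero p] {m t : ℕ}
    (M : Matrix (Fin m) (Fin t) (ZMod p)) : Prop :=
  ∀ n ≥ 1, ∀ f : G p n → ℝ, (∀ x, 0 ≤ f x ∧ f x ≤ 1) → expect p n f = 1 / 2 →
    TM p M n f * TM p M n (fun x => 1 - f x) ≥ (2 : ℝ) ^ (-(2 * (t : ℤ)))

/-- The system `M` is weakly Alon: for every `ε > 0`, for all sufficiently large `l`,
the system obtained by adding `l` free variables is common up to a loss of `ε·2^{−l}`. -/
def IsWeaklyAlon (p : ℕ) [NeZero p] {m t : ℕ} (M : Matrix (Fin m) (Fin t) (ZMod p)) :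
    Prop :=
  ∀ ε > (0 : ℝ), ∃ l₀ : ℕ, ∀ l ≥ l₀, ∀ n ≥ 1, ∀ f : G p n → ℝ,
    (∀ x, 0 ≤ f x ∧ f x ≤ 1) →
    (expect p n f) ^ l * TM p M n f + (1 - expect p n f) ^ l * TM p M n (fun x => 1 - f x) >
      (2 : ℝ) ^ (-(l : ℤ)) * ((2 : ℝ) ^ (1 - (t : ℤ)) - ε)


/-! Perturb `f` to `g = (1 - δ) f + δ`, whose mean is `(1 + δ)/2`. Choosing `(1 + δ)^l = ρ ≥ 1`,
the weakly Alon inequality for `g` at exponent `l` becomes, as `l → ∞` (so that `δ → 0`),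
`ρ·T_M(f) + ρ⁻¹·T_M(1 - f) ≥ 2^{1-t}`. Exchanging `f` and `1 - f` gives this for every `ρ > 0`,
and minimising over `ρ` gives `T_M(f)·T_M(1 - f) ≥ 2^{-2t}`. -/

open Filter Topology

lemma prod_add_le_prod_add {ι : Type*} (s : Finset ι) {a : ι → ℝ}
    (ha : ∀ i ∈ s, 0 ≤ a i ∧ a i ≤ 1) {δ : ℝ} (hδ : 0 ≤ δ) :
    ∏ i ∈ s, (a i + δ) ≤ ∏ i ∈ s, a i + ((1 + δ) ^ s.card - 1) := by
  classical
  induction s using Finset.induction_on with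
  | empty => simp
  | @insert i s hi ih =>
    obtain ⟨hai0, hai1⟩ := ha i (mem_insert_self i s)
    have ha' : ∀ j ∈ s, 0 ≤ a j ∧ a j ≤ 1 := fun j hj => ha j (mem_insert_of_mem hj)
    have hprod_le : ∏ j ∈ s, (a j + δ) ≤ (1 + δ) ^ s.card := by
      simpa using prod_le_prod (fun j hj => by linarith [(ha' j hj).1])
        (fun j hj => add_le_add_left (ha' j hj).2 δ)
    rw [prod_insert hi, prod_insert hi, card_insert_of_notMem hi]
    calc (a i + δ) * ∏ j ∈ s, (a j + δ)
        ≤ a i * (∏ j ∈ s, a j + ((1 + δ) ^ s.card - 1)) + δ * (1 + δ) ^ s.card := by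
          rw [add_mul]
          gcongr
          exact ih ha'
      _ ≤ a i * ∏ j ∈ s, a j + ((1 + δ) ^ (s.card + 1) - 1) := by
          have hpow : 1 ≤ (1 + δ) ^ s.card := one_le_pow₀ (by linarith)
          rw [pow_succ]
          nlinarith

lemma one_sub_pow_le_inv_one_add_pow {δ : ℝ} (hδ₀ : 0 ≤ δ) (hδ₁ : δ ≤ 1) (l : ℕ) :
    (1 - δ) ^ l ≤ ((1 + δ) ^ l)⁻¹ := by
  rw [← one_div, le_div_iff₀ (by positivity), ← mul_pow]
  exact pow_le_one₀ (by nlinarith) (by nlinarith)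

section SolutionDensity

variable {p : ℕ} [NeZero p] {m t : ℕ} (M : Matrix (Fin m) (Fin t) (ZMod p)) {n : ℕ}

lemma card_sols_pos : 0 < (sols p M n).card :=
  card_pos.2 ⟨0, by simp [sols]⟩

lemma TM_nonneg {f : G p n → ℝ} (hf : ∀ x, 0 ≤ f x) : 0 ≤ TM p M n f :=
  div_nonneg (sum_nonneg fun _ _ => prod_nonneg fun _ _ => hf _) (Nat.cast_nonneg _)

lemma TM_mono {f g : G p n → ℝ} (hf : ∀ x, 0 ≤ f x) (hfg : ∀ x, f x ≤ g x) :
    TM p M n f ≤ TM p M n g :=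
  div_le_div_of_nonneg_right
    (sum_le_sum fun _ _ => prod_le_prod (fun _ _ => hf _) fun _ _ => hfg _) (Nat.cast_nonneg _)

lemma TM_add_const_le {f : G p n → ℝ} (hf : ∀ x, 0 ≤ f x ∧ f x ≤ 1) {δ : ℝ} (hδ : 0 ≤ δ) :
    TM p M n (fun x => f x + δ) ≤ TM p M n f + ((1 + δ) ^ t - 1) := by
  have hcard : (0 : ℝ) < (sols p M n).card := by exact_mod_cast card_sols_pos M
  rw [TM, TM, div_add' _ _ _ hcard.ne', div_le_div_iff_of_pos_right hcard]
  calc ∑ x ∈ sols p M n, ∏ i, (f (x i) + δ)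
      ≤ ∑ x ∈ sols p M n, (∏ i, f (x i) + ((1 + δ) ^ t - 1)) :=
        sum_le_sum fun x _ => by
          simpa using
            prod_add_le_prod_add univ (a := fun i => f (x i)) (fun i _ => hf (x i)) hδ
    _ = ∑ x ∈ sols p M n, ∏ i, f (x i) + ((1 + δ) ^ t - 1) * (sols p M n).card := by
        rw [sum_add_distrib, sum_const, nsmul_eq_mul, mul_comm]

lemma expect_mul_add (f : G p n → ℝ) (c d : ℝ) :
    _root_.expect p n (fun x => c * f x + d) = c * _root_.expect p n f + d := by
  have hcard : (Fintype.card (G p n) : ℝ) = (p : ℝ) ^ n := by simp [G, ZMod.card]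
  have hpn : (p : ℝ) ^ n ≠ 0 := pow_ne_zero _ (Nat.cast_ne_zero.2 (NeZero.ne p))
  rw [_root_.expect, _root_.expect, sum_add_distrib, ← mul_sum, sum_const, card_univ,
    nsmul_eq_mul, hcard]
  field_simp

end SolutionDensity

namespace IsWeaklyAlon

variable {p : ℕ} [NeZero p] {m t : ℕ} {M : Matrix (Fin m) (Fin t) (ZMod p)}

-- The weakly Alon inequality for `(1 - δ) f + δ`, multiplied by `2 ^ l`.
lemma exists_lt_of_perturb (halon : IsWeaklyAlon p M) {ε : ℝ} (hε : 0 < ε) :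
    ∃ l₀ : ℕ, ∀ l ≥ l₀, ∀ n ≥ 1, ∀ f : G p n → ℝ, (∀ x, 0 ≤ f x ∧ f x ≤ 1) →
      _root_.expect p n f = 1 / 2 → ∀ δ : ℝ, 0 ≤ δ → δ ≤ 1 →
      (2 : ℝ) ^ (1 - (t : ℤ)) - ε <
        (1 + δ) ^ l * (TM p M n f + ((1 + δ) ^ t - 1)) +
          (1 - δ) ^ l * TM p M n (fun x => 1 - f x) := by
  obtain ⟨l₀, hl₀⟩ := halon ε hε
  refine ⟨l₀, fun l hl n hn f hf hmean δ hδ₀ hδ₁ => ?_⟩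
  set g : G p n → ℝ := fun x => (1 - δ) * f x + δ
  have hg : ∀ x, 0 ≤ g x ∧ g x ≤ 1 := fun x => by
    obtain ⟨hf₀, hf₁⟩ := hf x
    constructor <;> nlinarith
  have hg_mean : _root_.expect p n g = (1 + δ) / 2 := by
    rw [expect_mul_add, hmean]; ring
  have hTg : TM p M n g ≤ TM p M n f + ((1 + δ) ^ t - 1) :=
    (TM_mono M (fun x => (hg x).1) fun x => by nlinarith [(hf x).1]).trans
      (TM_add_const_le M hf hδ₀)
  have hTg' : TM p M n (fun x => 1 - g x) ≤ TM p M n (fun x => 1 - f x) :=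
    TM_mono M (fun x => by linarith [(hg x).2]) fun x => by
      show 1 - ((1 - δ) * f x + δ) ≤ 1 - f x
      nlinarith [(hf x).2]
  have H := hl₀ l hl n hn g hg
  rw [hg_mean, show 1 - (1 + δ) / 2 = (1 - δ) / 2 by ring, div_pow, div_pow, zpow_neg,
    zpow_natCast] at H
  have h2l : (0 : ℝ) < 2 ^ l := by positivity
  rw [← mul_lt_mul_iff_of_pos_left (inv_pos.2 h2l)]
  calc _ < _ := H
    _ ≤ (1 + δ) ^ l / 2 ^ l * (TM p M n f + ((1 + δ) ^ t - 1)) +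
          (1 - δ) ^ l / 2 ^ l * TM p M n (fun x => 1 - f x) := by
        gcongr
    _ = _ := by ring

lemma le_mul_add_inv_mul_of_one_le (halon : IsWeaklyAlon p M) {n : ℕ} (hn : 1 ≤ n)
    {f : G p n → ℝ} (hf : ∀ x, 0 ≤ f x ∧ f x ≤ 1) (hmean : _root_.expect p n f = 1 / 2)
    {ρ : ℝ} (hρ : 1 ≤ ρ) :
    (2 : ℝ) ^ (1 - (t : ℤ)) ≤ ρ * TM p M n f + ρ⁻¹ * TM p M n (fun x => 1 - f x) := by
  refine le_of_forall_sub_le fun ε hε => ?_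
  obtain ⟨l₀, hl₀⟩ := halon.exists_lt_of_perturb hε
  set δ : ℕ → ℝ := fun l => ρ ^ ((l : ℝ)⁻¹) - 1
  have hδ_lim : Tendsto δ atTop (𝓝 0) := by
    have h := ((Real.continuousAt_const_rpow (by linarith : ρ ≠ 0)).tendsto.comp
      (tendsto_inv_atTop_nhds_zero_nat (𝕜 := ℝ))).sub_const 1
    simpa [Function.comp_def] using h
  have hbound : ∀ᶠ l in atTop, (2 : ℝ) ^ (1 - (t : ℤ)) - ε ≤
      ρ * (TM p M n f + ((1 + δ l) ^ t - 1)) + ρ⁻¹ * TM p M n (fun x => 1 - f x) := by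
    filter_upwards [eventually_ge_atTop l₀, eventually_ge_atTop 1,
      hδ_lim.eventually_le_const one_pos] with l hl₀l hl hδ₁
    have hδ₀ : 0 ≤ δ l := sub_nonneg.2 (Real.one_le_rpow hρ (by positivity))
    have hρl : (1 + δ l) ^ l = ρ := by
      rw [add_sub_cancel, ← Real.rpow_natCast, ← Real.rpow_mul (by linarith),
        inv_mul_cancel₀ (by positivity), Real.rpow_one]
    have hb := TM_nonneg M (f := fun x => 1 - f x) fun x => by linarith [(hf x).2]
    calc _ ≤ _ := (hl₀ l hl₀l n hn f hf hmean (δ l) hδ₀ hδ₁).le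
      _ ≤ _ := by
        rw [hρl]
        gcongr
        simpa [hρl] using one_sub_pow_le_inv_one_add_pow hδ₀ hδ₁ l
  have hlim : Tendsto (fun l => ρ * (TM p M n f + ((1 + δ l) ^ t - 1)) +
      ρ⁻¹ * TM p M n (fun x => 1 - f x)) atTop
      (𝓝 (ρ * TM p M n f + ρ⁻¹ * TM p M n (fun x => 1 - f x))) := by
    have h := ((((hδ_lim.const_add 1).pow t).sub_const 1).const_add (TM p M n f)).const_mul ρ
    simpa using h.add_const (ρ⁻¹ * TM p M n (fun x => 1 - f x))
  exact ge_of_tendsto hlim hbound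

lemma le_mul_add_inv_mul (halon : IsWeaklyAlon p M) {n : ℕ} (hn : 1 ≤ n)
    {f : G p n → ℝ} (hf : ∀ x, 0 ≤ f x ∧ f x ≤ 1) (hmean : _root_.expect p n f = 1 / 2)
    {ρ : ℝ} (hρ : 0 < ρ) :
    (2 : ℝ) ^ (1 - (t : ℤ)) ≤ ρ * TM p M n f + ρ⁻¹ * TM p M n (fun x => 1 - f x) := by
  rcases le_total 1 ρ with hρ₁ | hρ₁
  · exact halon.le_mul_add_inv_mul_of_one_le hn hf hmean hρ₁
  · have hf' : ∀ x, 0 ≤ 1 - f x ∧ 1 - f x ≤ 1 := fun x =>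
      ⟨by linarith [(hf x).2], by linarith [(hf x).1]⟩
    have hmean' : _root_.expect p n (fun x => 1 - f x) = 1 / 2 := by
      rw [show (fun x => 1 - f x) = fun x => -1 * f x + 1 by ext; ring, expect_mul_add, hmean]
      norm_num
    simpa [add_comm] using
      halon.le_mul_add_inv_mul_of_one_le hn hf' hmean' (one_le_inv_iff₀.2 ⟨hρ, hρ₁⟩)

end IsWeaklyAlon

lemma sq_le_mul_of_forall_le_mul_add_inv_mul {a b c : ℝ} (hc : 0 < c) (hb : 0 ≤ b)
    (h : ∀ ρ > 0, 2 * c ≤ ρ * a + ρ⁻¹ * b) : c ^ 2 ≤ a * b := by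
  rcases lt_or_ge 0 a with ha | ha
  · have := h (c / a) (div_pos hc ha)
    rw [div_mul_cancel₀ c ha.ne', inv_div] at this
    have : c ≤ a / c * b := by linarith
    rw [div_mul_eq_mul_div, le_div_iff₀ hc] at this
    nlinarith
  · have := h ((b + 1) / c) (by positivity)
    have hρa : (b + 1) / c * a ≤ 0 := mul_nonpos_of_nonneg_of_nonpos (by positivity) ha
    have hρb : ((b + 1) / c)⁻¹ * b < c := by
      rw [inv_div, div_mul_eq_mul_div, div_lt_iff₀ (by positivity)]
      nlinarith
    linarith

theorem weaklyAlon_imp_geometricallyCommon_general (p : ℕ) [NeZero p]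
    {m t : ℕ} (M : Matrix (Fin m) (Fin t) (ZMod p))
    (halon : IsWeaklyAlon p M) :
    IsGeometricallyCommon p M := by
  intro n hn f hf hmean
  have hsq : (2 : ℝ) ^ (-(2 * (t : ℤ))) = ((2 : ℝ) ^ (-(t : ℤ))) ^ 2 := by
    rw [← zpow_natCast, ← zpow_mul]; ring_nf
  have htwice : (2 : ℝ) ^ (1 - (t : ℤ)) = 2 * (2 : ℝ) ^ (-(t : ℤ)) := by
    rw [sub_eq_add_neg, zpow_add₀ two_ne_zero, zpow_one]
  rw [ge_iff_le, hsq]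
  refine sq_le_mul_of_forall_le_mul_add_inv_mul (by positivity)
    (TM_nonneg M fun x => by linarith [(hf x).2]) fun ρ hρ => ?_
  rw [← htwice]
  exact halon.le_mul_add_inv_mul hn hf hmean hρ

theorem weaklyAlon_imp_geometricallyCommon (p : ℕ) [NeZero p] (hp : p.Prime)
    {m t : ℕ} (hmt : m < t) (M : Matrix (Fin m) (Fin t) (ZMod p)) (hrank : M.rank = m)
    (hker : ∀ i : Fin t, ∃ v : Fin t → ZMod p, M.mulVec v = 0 ∧ v i ≠ 0)
    (hprev : IsHalfPrevalent p M) (halon : IsWeaklyAlon p M) :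
    IsGeometricallyCommon p M :=
  weaklyAlon_imp_geometricallyCommon_general p M halon
end
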